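/- arXiv:1211.0113 — 4 statements merged into one kernel-verified Lean document; each statement's English description precedes it below -/
import Mathlib

section
/- Let f : [0,1] → ℝ be a C² function such that f'(0) = 0, f'' > 0 on [0,1], and ∫₀¹ f(y) dy = 0. Then ∫₀¹ f(y)² dy ≤ (1/3) f(1)². -/
/-!
Compare `f` with the mean-zero line `ℓ y = f 1 * (2 * y - 1)`, for which `∫ ℓ² = f(1)² / 3`.
Since `f' (0) = 0` and `f'' > 0`, the function `f` is convex and nondecreasing, so `ℓ - f`
is concave, vanishes at `1` and has mean zero; hence it is `≤ 0` before some point `p` and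
`≥ 0` after it. As `ℓ + f` is nondecreasing, `(ℓ - f) (ℓ + f - (ℓ + f) p) ≥ 0` pointwise, and
integrating gives `∫ ℓ² - ∫ f² = ∫ (ℓ - f) (ℓ + f) ≥ 0`.
-/

open Set MeasureTheory intervalIntegral

section SignChange

variable {a b : ℝ} {h φ : ℝ → ℝ}

theorem ConcaveOn.exists_sign_change (hab : a ≤ b) (hh : ConcaveOn ℝ (Icc a b) h)
    (hb : 0 ≤ h b) : ∃ p ∈ Icc a b, (∀ y ∈ Ico a p, h y ≤ 0) ∧ ∀ y ∈ Ioc p b, 0 ≤ h y := by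
  have nonneg_of_pos : ∀ y ∈ Icc a b, 0 < h y → ∀ z ∈ Icc y b, 0 ≤ h z := fun y hy hpos z hz =>
    (le_min hpos.le hb).trans <| hh.ge_on_segment hy (right_mem_Icc.2 hab) <| by
      rwa [segment_eq_Icc (hz.1.trans hz.2)]
  set S := insert a {y ∈ Icc a b | h y < 0}
  have hS : BddAbove S := ⟨b, by rintro y (rfl | ⟨hy, -⟩); exacts [hab, hy.2]⟩
  have haS : a ≤ sSup S := le_csSup hS (mem_insert a _)
  refine ⟨sSup S, ⟨haS, csSup_le (insert_nonempty _ _) ?_⟩, ?_, ?_⟩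
  · rintro y (rfl | ⟨hy, -⟩); exacts [hab, hy.2]
  · intro y ⟨hay, hyS⟩
    obtain ⟨t, ht, hyt⟩ := exists_lt_of_lt_csSup (insert_nonempty _ _) hyS
    rcases ht with rfl | ⟨ht, hneg⟩
    · exact absurd hay hyt.not_ge
    · by_contra! hpos
      exact (nonneg_of_pos y ⟨hay, hyt.le.trans ht.2⟩ hpos t ⟨hyt.le, ht.2⟩).not_gt hneg
  · intro y ⟨hSy, hyb⟩
    by_contra! hneg
    have hyS : y ∈ S := mem_insert_of_mem a ⟨⟨haS.trans hSy.le, hyb⟩, hneg⟩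
    exact (le_csSup hS hyS).not_gt hSy

theorem integral_mul_nonneg_of_sign_change (hab : a ≤ b) (hh : ContinuousOn h (Icc a b))
    (hint : ∫ y in a..b, h y = 0) (hφ : MonotoneOn φ (Icc a b)) {p : ℝ} (hp : p ∈ Icc a b)
    (hneg : ∀ y ∈ Ico a p, h y ≤ 0) (hpos : ∀ y ∈ Ioc p b, 0 ≤ h y) :
    0 ≤ ∫ y in a..b, h y * φ y := by
  have hh' : ContinuousOn h (uIcc a b) := by rwa [uIcc_of_le hab]
  have hhφ : IntervalIntegrable (fun y => h y * φ y) volume a b :=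
    (MonotoneOn.intervalIntegrable (by rwa [uIcc_of_le hab])).continuousOn_mul hh'
  have hshift : ∫ y in a..b, h y * φ y = ∫ y in a..b, h y * (φ y - φ p) := by
    simp only [mul_sub, integral_sub hhφ (hh'.intervalIntegrable.mul_const _),
      intervalIntegral.integral_mul_const, hint, zero_mul, sub_zero]
  rw [hshift]
  refine integral_nonneg hab fun y hy => ?_
  rcases lt_trichotomy y p with hyp | rfl | hpy
  · exact mul_nonneg_of_nonpos_of_nonpos (hneg y ⟨hy.1, hyp⟩) (sub_nonpos.2 (hφ hy hp hyp.le))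
  · simp
  · exact mul_nonneg (hpos y ⟨hpy, hy.2⟩) (sub_nonneg.2 (hφ hp hy hpy.le))

theorem ConcaveOn.integral_mul_nonneg_of_monotoneOn (hab : a ≤ b)
    (hh : ConcaveOn ℝ (Icc a b) h) (hhc : ContinuousOn h (Icc a b)) (hb : 0 ≤ h b)
    (hint : ∫ y in a..b, h y = 0) (hφ : MonotoneOn φ (Icc a b)) :
    0 ≤ ∫ y in a..b, h y * φ y :=
  let ⟨_, hp, hneg, hpos⟩ := hh.exists_sign_change hab hb
  integral_mul_nonneg_of_sign_change hab hhc hint hφ hp hneg hpos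

end SignChange

theorem integral_sq_le_of_convexOn_of_monotoneOn {f : ℝ → ℝ} (hc : ContinuousOn f (Icc 0 1))
    (hconv : ConvexOn ℝ (Icc 0 1) f) (hmono : MonotoneOn f (Icc 0 1))
    (hint : ∫ y in (0:ℝ)..1, f y = 0) :
    ∫ y in (0:ℝ)..1, f y ^ 2 ≤ 1 / 3 * f 1 ^ 2 := by
  have hc' : ContinuousOn f (uIcc 0 1) := by rwa [uIcc_of_le zero_le_one]
  set b := f 1
  set ℓ : ℝ → ℝ := fun y => b * (2 * y - 1)
  have hb : 0 ≤ b := by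
    have := integral_mono_on (μ := volume) zero_le_one hc'.intervalIntegrable
      intervalIntegrable_const fun y hy => hmono hy (right_mem_Icc.2 zero_le_one) hy.2
    simpa [hint] using this
  have hℓc : Continuous ℓ := by fun_prop
  have hℓ : ∫ y in (0:ℝ)..1, ℓ y = 0 := by
    rw [intervalIntegral.integral_const_mul, integral_comp_mul_sub (fun x => x) two_ne_zero]
    norm_num
  have hℓsq : ∫ y in (0:ℝ)..1, ℓ y ^ 2 = 1 / 3 * b ^ 2 := by
    simp only [ℓ, mul_pow, intervalIntegral.integral_const_mul]
    rw [integral_comp_mul_sub (fun x => x ^ 2) two_ne_zero]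
    norm_num
    ring
  have hℓconc : ConcaveOn ℝ (Icc 0 1) ℓ :=
    ⟨convex_Icc 0 1, fun x _ y _ s t _ _ hst => le_of_eq <| by
      simp only [ℓ, smul_eq_mul]
      linear_combination (-b) * hst⟩
  have hℓmono : Monotone ℓ := fun x y hxy => by simp only [ℓ]; gcongr
  have hdiff : ∫ y in (0:ℝ)..1, (ℓ - f) y = 0 := by
    simp [integral_sub (hℓc.intervalIntegrable 0 1) hc'.intervalIntegrable, hℓ, hint]
  have key : 0 ≤ ∫ y in (0:ℝ)..1, (ℓ - f) y * (ℓ + f) y :=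
    (hℓconc.sub hconv).integral_mul_nonneg_of_monotoneOn zero_le_one (hℓc.continuousOn.sub hc)
      (by norm_num [ℓ, b]) hdiff ((hℓmono.monotoneOn _).add hmono)
  have hsplit : ∫ y in (0:ℝ)..1, (ℓ - f) y * (ℓ + f) y
      = (∫ y in (0:ℝ)..1, ℓ y ^ 2) - ∫ y in (0:ℝ)..1, f y ^ 2 := by
    refine (integral_congr fun y _ => ?_).trans
      (integral_sub ((hℓc.pow 2).intervalIntegrable 0 1) (hc'.pow 2).intervalIntegrable)
    simp only [Pi.sub_apply, Pi.add_apply]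
    ring
  linarith

theorem convex_mean_zero_L2_estimate
    (f : ℝ → ℝ)
    (hf : ContDiffOn ℝ 2 f (Set.Icc 0 1))
    (hf'0 : deriv f 0 = 0)
    (hf'' : ∀ y ∈ Set.Icc (0:ℝ) 1, 0 < deriv (deriv f) y)
    (hint : ∫ y in (0:ℝ)..1, f y = 0) :
    ∫ y in (0:ℝ)..1, (f y)^2 ≤ (1/3) * (f 1)^2 := by
  -- `deriv` is junk `0` where differentiability fails, so `f'' > 0` makes `f'` differentiable
  -- on all of `[0, 1]`; in particular `f'` is continuous at `0`, where `f' (0) = 0`.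
  have hf'_diff : ∀ y ∈ Icc (0:ℝ) 1, DifferentiableAt ℝ (deriv f) y := fun y hy =>
    by_contra fun hnd => (hf'' y hy).ne' (deriv_zero_of_not_differentiableAt hnd)
  have hf_diff : DifferentiableOn ℝ f (interior (Icc 0 1)) := fun y hy =>
    ((hf.differentiableOn two_ne_zero y (interior_subset hy)).differentiableAt
      (mem_interior_iff_mem_nhds.1 hy)).differentiableWithinAt
  have hf'_mono : MonotoneOn (deriv f) (Icc 0 1) :=
    monotoneOn_of_deriv_nonneg (convex_Icc 0 1)
      (fun y hy => (hf'_diff y hy).continuousAt.continuousWithinAt)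
      (fun y hy => (hf'_diff y (interior_subset hy)).differentiableWithinAt)
      fun y hy => (hf'' y (interior_subset hy)).le
  have hf'_nonneg : ∀ y ∈ Icc (0:ℝ) 1, 0 ≤ deriv f y := fun y hy =>
    hf'0 ▸ hf'_mono (left_mem_Icc.2 zero_le_one) hy hy.1
  exact integral_sq_le_of_convexOn_of_monotoneOn hf.continuousOn
    ((hf'_mono.mono interior_subset).convexOn_of_deriv (convex_Icc 0 1) hf.continuousOn hf_diff)
    (monotoneOn_of_deriv_nonneg (convex_Icc 0 1) hf.continuousOn hf_diff
      fun y hy => hf'_nonneg y (interior_subset hy))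
    hint
end

section
/- Let a : [0,T) × [0,1] → ℝ and v : [0,T) × [0,1] → ℝ be smooth functions satisfying a_t + v a_y = a² − 2∫₀¹ a(t,z)² dz, with v(t,0) = 0 for all t, and suppose ∂_y a(0,0) = 0. Then ∂_y a(t,0) = 0 for all t ∈ [0,T). -/
open Set

theorem ay_zero_at_boundary
    (T : ℝ) (a v : ℝ → ℝ → ℝ)
    (ha : ContDiff ℝ (⊤ : ℕ∞) (fun q : ℝ × ℝ => a q.1 q.2))
    (hv : ContDiff ℝ (⊤ : ℕ∞) (fun q : ℝ × ℝ => v q.1 q.2))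
    (heq : ∀ t ∈ Set.Ico 0 T, ∀ y ∈ Set.Icc (0:ℝ) 1,
      deriv (fun s => a s y) t + v t y * deriv (fun y' => a t y') y
        = (a t y)^2 - 2 * ∫ z in (0:ℝ)..1, (a t z)^2)
    (hbc : ∀ t ∈ Set.Ico 0 T, v t 0 = 0)
    (hinit : deriv (fun y' => a 0 y') 0 = 0) :
    ∀ t ∈ Set.Ico 0 T, deriv (fun y' => a t y') 0 = 0 := by
  set F : ℝ × ℝ → ℝ := fun q => a q.1 q.2 with hF
  set V : ℝ × ℝ → ℝ := fun q => v q.1 q.2 with hV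
  have hFd : Differentiable ℝ F := ha.differentiable (by simp)
  have hVd : Differentiable ℝ V := hv.differentiable (by simp)
  have hF1 : ContDiff ℝ 1 (fderiv ℝ F) := ha.fderiv_right (WithTop.coe_le_coe.2 le_top)
  -- derivative of a in y equals fderiv applied to (0,1)
  have hyd : ∀ t y : ℝ, HasDerivAt (fun y' => a t y') (fderiv ℝ F (t, y) (0, 1)) y := by
    intro t y
    have h1 : HasDerivAt (fun y' : ℝ => ((t, y') : ℝ × ℝ)) ((0 : ℝ), (1 : ℝ)) y :=
      (hasDerivAt_const y t).prodMk (hasDerivAt_id y)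
    exact ((hFd (t, y)).hasFDerivAt).comp_hasDerivAt y h1
  have htd : ∀ t y : ℝ, HasDerivAt (fun s => a s y) (fderiv ℝ F (t, y) (1, 0)) t := by
    intro t y
    have h1 : HasDerivAt (fun s : ℝ => ((s, y) : ℝ × ℝ)) ((1 : ℝ), (0 : ℝ)) t :=
      (hasDerivAt_id t).prodMk (hasDerivAt_const t y)
    exact ((hFd (t, y)).hasFDerivAt).comp_hasDerivAt t h1
  have hvyd : ∀ t y : ℝ, HasDerivAt (fun y' => v t y') (fderiv ℝ V (t, y) (0, 1)) y := by
    intro t y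
    have h1 : HasDerivAt (fun y' : ℝ => ((t, y') : ℝ × ℝ)) ((0 : ℝ), (1 : ℝ)) y :=
      (hasDerivAt_const y t).prodMk (hasDerivAt_id y)
    exact ((hVd (t, y)).hasFDerivAt).comp_hasDerivAt y h1
  set g : ℝ → ℝ := fun t => fderiv ℝ F (t, 0) (0, 1) with hg
  have hgdval : ∀ t y : ℝ, deriv (fun y' => a t y') y = fderiv ℝ F (t, y) (0, 1) := fun t y =>
    (hyd t y).deriv
  have htdval : ∀ t y : ℝ, deriv (fun s => a s y) t = fderiv ℝ F (t, y) (1, 0) := fun t y =>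
    (htd t y).deriv
  -- second derivative of F at (t,0)
  set f'' : ℝ → (ℝ × ℝ) →L[ℝ] (ℝ × ℝ) →L[ℝ] ℝ := fun t => fderiv ℝ (fderiv ℝ F) (t, 0) with hf''
  have hfd2 : ∀ t : ℝ, HasFDerivAt (fderiv ℝ F) (f'' t) (t, 0) := fun t =>
    ((hF1.differentiable one_ne_zero) (t, 0)).hasFDerivAt
  have hsymm : ∀ t : ℝ, ∀ p q : ℝ × ℝ, f'' t p q = f'' t q p := fun t =>
    second_derivative_symmetric (fun y => (hFd y).hasFDerivAt) (hfd2 t)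
  -- derivative of g
  have hgd : ∀ t : ℝ, HasDerivAt g (f'' t (1, 0) (0, 1)) t := by
    intro t
    have h1 : HasDerivAt (fun s : ℝ => ((s, (0:ℝ)) : ℝ × ℝ)) ((1 : ℝ), (0 : ℝ)) t :=
      (hasDerivAt_id t).prodMk (hasDerivAt_const t 0)
    have h2 : HasFDerivAt (fun q : ℝ × ℝ => fderiv ℝ F q (0, 1))
        ((ContinuousLinearMap.apply ℝ ℝ ((0:ℝ), (1:ℝ))).comp (f'' t)) (t, 0) :=
      (ContinuousLinearMap.apply ℝ ℝ ((0:ℝ), (1:ℝ))).hasFDerivAt.comp _ (hfd2 t)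
    have := h2.comp_hasDerivAt t h1
    simpa [Function.comp_def] using this
  -- derivative in y of the y-derivative of a (needed for product rule, value irrelevant)
  have haydy : ∀ t : ℝ, HasDerivAt (fun y => fderiv ℝ F (t, y) (0, 1))
      (f'' t (0, 1) (0, 1)) 0 := by
    intro t
    have h1 : HasDerivAt (fun y : ℝ => ((t, y) : ℝ × ℝ)) ((0 : ℝ), (1 : ℝ)) 0 :=
      (hasDerivAt_const (0:ℝ) t).prodMk (hasDerivAt_id 0)
    have h2 : HasFDerivAt (fun q : ℝ × ℝ => fderiv ℝ F q (0, 1))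
        ((ContinuousLinearMap.apply ℝ ℝ ((0:ℝ), (1:ℝ))).comp (f'' t)) (t, 0) :=
      (ContinuousLinearMap.apply ℝ ℝ ((0:ℝ), (1:ℝ))).hasFDerivAt.comp _ (hfd2 t)
    have := h2.comp_hasDerivAt 0 h1
    simpa [Function.comp_def] using this
  have hatdy : ∀ t : ℝ, HasDerivAt (fun y => fderiv ℝ F (t, y) (1, 0))
      (f'' t (0, 1) (1, 0)) 0 := by
    intro t
    have h1 : HasDerivAt (fun y : ℝ => ((t, y) : ℝ × ℝ)) ((0 : ℝ), (1 : ℝ)) 0 :=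
      (hasDerivAt_const (0:ℝ) t).prodMk (hasDerivAt_id 0)
    have h2 : HasFDerivAt (fun q : ℝ × ℝ => fderiv ℝ F q (1, 0))
        ((ContinuousLinearMap.apply ℝ ℝ ((1:ℝ), (0:ℝ))).comp (f'' t)) (t, 0) :=
      (ContinuousLinearMap.apply ℝ ℝ ((1:ℝ), (0:ℝ))).hasFDerivAt.comp _ (hfd2 t)
    have := h2.comp_hasDerivAt 0 h1
    simpa [Function.comp_def] using this
  set c : ℝ → ℝ := fun t => 2 * a t 0 - fderiv ℝ V (t, 0) (0, 1) with hc
  -- the ODE for g on Ico 0 T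
  have hODE : ∀ t ∈ Set.Ico 0 T, HasDerivAt g (c t * g t) t := by
    intro t ht
    -- Differentiate the PDE in y at 0, within Icc 0 1
    have hL : HasDerivAt
        (fun y => deriv (fun s => a s y) t + v t y * deriv (fun y' => a t y') y)
        (f'' t (0, 1) (1, 0) + (fderiv ℝ V (t, 0) (0, 1) * g t +
          v t 0 * f'' t (0, 1) (0, 1))) 0 := by
      have h1 : HasDerivAt (fun y => deriv (fun s => a s y) t) (f'' t (0, 1) (1, 0)) 0 := by
        have := hatdy t
        refine HasDerivAt.congr_of_eventuallyEq this ?_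
        filter_upwards with y
        rw [htdval t y]
      have h2 : HasDerivAt (fun y => v t y * deriv (fun y' => a t y') y)
          (fderiv ℝ V (t, 0) (0, 1) * g t + v t 0 * f'' t (0, 1) (0, 1)) 0 := by
        have ha' : HasDerivAt (fun y => deriv (fun y' => a t y') y) (f'' t (0, 1) (0, 1)) 0 := by
          have := haydy t
          refine HasDerivAt.congr_of_eventuallyEq this ?_
          filter_upwards with y
          rw [hgdval t y]
        have := (hvyd t 0).mul ha'
        simpa [hgdval t 0, Pi.mul_def] using this
      exact h1.add h2
    have hR : HasDerivAt (fun y => (a t y)^2 - 2 * ∫ z in (0:ℝ)..1, (a t z)^2)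
        (2 * a t 0 * g t) 0 := by
      have h1 : HasDerivAt (fun y => (a t y)^2) (2 * a t 0 * g t) 0 := by
        have := (hyd t 0).pow 2
        simpa [hgdval t 0, hg, Pi.pow_def] using this
      simpa using h1.sub_const (2 * ∫ z in (0:ℝ)..1, (a t z)^2)
    have hud : UniqueDiffWithinAt ℝ (Set.Icc (0:ℝ) 1) 0 :=
      uniqueDiffOn_Icc zero_lt_one 0 (by simp)
    have hLw := (hL.hasDerivWithinAt (s := Set.Icc (0:ℝ) 1)).derivWithin hud
    have hRw := (hR.hasDerivWithinAt (s := Set.Icc (0:ℝ) 1)).derivWithin hud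
    have hcong : derivWithin
        (fun y => deriv (fun s => a s y) t + v t y * deriv (fun y' => a t y') y)
        (Set.Icc (0:ℝ) 1) 0 =
        derivWithin (fun y => (a t y)^2 - 2 * ∫ z in (0:ℝ)..1, (a t z)^2)
        (Set.Icc (0:ℝ) 1) 0 := by
      apply derivWithin_congr
      · intro y hy; exact heq t ht y hy
      · exact heq t ht 0 (by simp)
    rw [hLw, hRw] at hcong
    rw [hbc t ht] at hcong
    have key : f'' t (0, 1) (1, 0) = c t * g t := by
      simp only [hc, zero_mul, add_zero] at hcong ⊢
      ring_nf
      ring_nf at hcong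
      linarith
    have := hgd t
    rwa [hsymm t (1,0) (0,1), key] at this
  -- g 0 = 0
  have hg0 : g 0 = 0 := (hgdval 0 0).symm.trans hinit
  -- continuity
  have hgc : Continuous g := continuous_iff_continuousAt.2 fun t => (hgd t).continuousAt
  have hcc : Continuous c := by
    have h1 : Continuous fun t : ℝ => a t 0 := by
      have : Continuous fun t : ℝ => F (t, 0) :=
        ha.continuous.comp (continuous_id.prodMk continuous_const)
      simpa [hF] using this
    have h2 : Continuous fun t : ℝ => fderiv ℝ V (t, 0) (0, 1) := by
      have hV1 : ContDiff ℝ 1 (fderiv ℝ V) := hv.fderiv_right (WithTop.coe_le_coe.2 le_top)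
      exact (hV1.continuous.comp (continuous_id.prodMk continuous_const)).clm_apply
        continuous_const
    exact (continuous_const.mul h1).sub h2
  -- Gronwall
  intro t ht
  rw [hgdval t 0]
  show g t = 0
  obtain ⟨ht1, ht2⟩ := ht
  have hsub : Set.Icc (0:ℝ) t ⊆ Set.Ico 0 T := fun s hs =>
    ⟨hs.1, lt_of_le_of_lt hs.2 ht2⟩
  obtain ⟨K, hKmem, hK⟩ := (isCompact_Icc (a := (0:ℝ)) (b := t)).exists_isMaxOn
    ⟨0, by simp [ht1]⟩ (continuous_norm.comp hcc).continuousOn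
  have hbound : ∀ s ∈ Set.Ico (0:ℝ) t, ‖c s * g s‖ ≤ ‖c K‖ * ‖g s‖ + 0 := by
    intro s hs
    rw [norm_mul, add_zero]
    exact mul_le_mul_of_nonneg_right (hK (Set.mem_Icc.2 ⟨hs.1, hs.2.le⟩)) (norm_nonneg _)
  have hder : ∀ s ∈ Set.Ico (0:ℝ) t, HasDerivWithinAt g (c s * g s) (Set.Ici s) s := by
    intro s hs
    exact (hODE s (hsub ⟨hs.1, hs.2.le⟩)).hasDerivWithinAt
  have := norm_le_gronwallBound_of_norm_deriv_right_le (δ := 0) (ε := 0) (K := ‖c K‖)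
    hgc.continuousOn hder (by simp [hg0]) hbound t (Set.mem_Icc.2 ⟨ht1, le_refl t⟩)
  rw [gronwallBound_ε0] at this
  simp only [zero_mul] at this
  exact norm_le_zero_iff.1 this
end

section
/- Let (u, v, p) be a smooth solution of the 2D hydrostatic Euler equations on [0,T) × ℝ × [0,1] with v = 0 on y ∈ {0,1}, and let g : [0,T) → ℝ be C² with g(0) = g'(0) = 0. Define ũ(t, x, y) := u(t, x + g(t), y) − g'(t), ṽ(t, x, y) := v(t, x + g(t), y), p̃(t, x) := p(t, x + g(t)) + x g''(t) (up to a function of t). Then (ũ, ṽ, p̃) is also a smooth solution of the hydrostatic Euler equations with the same boundary conditions and the same initial data for ũ as u. -/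
set_option maxHeartbeats 1000000

private lemma aux3 {F : ℝ × ℝ × ℝ → ℝ} (hF : Differentiable ℝ F)
    {a b c : ℝ → ℝ} {a' b' c' t : ℝ}
    (ha : HasDerivAt a a' t) (hb : HasDerivAt b b' t) (hc : HasDerivAt c c' t) :
    HasDerivAt (fun s => F (a s, b s, c s))
      (fderiv ℝ F (a t, b t, c t) (a', b', c')) t :=
  (hF _).hasFDerivAt.comp_hasDerivAt t (ha.prodMk (hb.prodMk hc))

private lemma aux2 {F : ℝ × ℝ → ℝ} (hF : Differentiable ℝ F)
    {a b : ℝ → ℝ} {a' b' t : ℝ}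
    (ha : HasDerivAt a a' t) (hb : HasDerivAt b b' t) :
    HasDerivAt (fun s => F (a s, b s))
      (fderiv ℝ F (a t, b t) (a', b')) t :=
  (hF _).hasFDerivAt.comp_hasDerivAt t (ha.prodMk hb)

theorem invariant_transformation
    (T : ℝ) (u v : ℝ → ℝ → ℝ → ℝ) (p : ℝ → ℝ → ℝ) (g : ℝ → ℝ)
    (hu : ContDiff ℝ (⊤ : ℕ∞) (fun q : ℝ × ℝ × ℝ => u q.1 q.2.1 q.2.2))
    (hv : ContDiff ℝ (⊤ : ℕ∞) (fun q : ℝ × ℝ × ℝ => v q.1 q.2.1 q.2.2))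
    (hp : ContDiff ℝ (⊤ : ℕ∞) (fun q : ℝ × ℝ => p q.1 q.2))
    (hg : ContDiff ℝ 2 g) (hg0 : g 0 = 0) (hg'0 : deriv g 0 = 0)
    (hmom : ∀ t ∈ Set.Ico 0 T, ∀ x : ℝ, ∀ y ∈ Set.Icc (0:ℝ) 1,
      deriv (fun s => u s x y) t + u t x y * deriv (fun x' => u t x' y) x
        + v t x y * deriv (fun y' => u t x y') y = - deriv (fun x' => p t x') x)
    (hinc : ∀ t ∈ Set.Ico 0 T, ∀ x : ℝ, ∀ y ∈ Set.Icc (0:ℝ) 1,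
      deriv (fun x' => u t x' y) x + deriv (fun y' => v t x y') y = 0)
    (hbc : ∀ t ∈ Set.Ico 0 T, ∀ x : ℝ, v t x 0 = 0 ∧ v t x 1 = 0)
    (U V : ℝ → ℝ → ℝ → ℝ) (P : ℝ → ℝ → ℝ)
    (hU : ∀ t x y, U t x y = u t (x + g t) y - deriv g t)
    (hV : ∀ t x y, V t x y = v t (x + g t) y)
    (hP : ∀ t x, P t x = p t (x + g t) + x * deriv (deriv g) t) :
    (∀ t ∈ Set.Ico 0 T, ∀ x : ℝ, ∀ y ∈ Set.Icc (0:ℝ) 1,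
      deriv (fun s => U s x y) t + U t x y * deriv (fun x' => U t x' y) x
        + V t x y * deriv (fun y' => U t x y') y = - deriv (fun x' => P t x') x)
    ∧ (∀ t ∈ Set.Ico 0 T, ∀ x : ℝ, ∀ y ∈ Set.Icc (0:ℝ) 1,
      deriv (fun x' => U t x' y) x + deriv (fun y' => V t x y') y = 0)
    ∧ (∀ t ∈ Set.Ico 0 T, ∀ x : ℝ, V t x 0 = 0 ∧ V t x 1 = 0)
    ∧ (∀ x : ℝ, ∀ y ∈ Set.Icc (0:ℝ) 1, U 0 x y = u 0 x y) := by
  have hud : Differentiable ℝ (fun q : ℝ × ℝ × ℝ => u q.1 q.2.1 q.2.2) :=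
    hu.differentiable (by simp)
  have hvd : Differentiable ℝ (fun q : ℝ × ℝ × ℝ => v q.1 q.2.1 q.2.2) :=
    hv.differentiable (by simp)
  have hpd : Differentiable ℝ (fun q : ℝ × ℝ => p q.1 q.2) :=
    hp.differentiable (by simp)
  have hg2 : Differentiable ℝ g ∧ ContDiff ℝ 1 (deriv g) := by
    have := contDiff_succ_iff_deriv.mp (show ContDiff ℝ (1 + 1) g by exact_mod_cast hg)
    exact ⟨this.1, this.2.2⟩
  have hgd : ∀ t : ℝ, HasDerivAt g (deriv g t) t :=
    fun t => (hg2.1 t).hasDerivAt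
  have hgd2 : ∀ t : ℝ, HasDerivAt (deriv g) (deriv (deriv g) t) t :=
    fun t => ((hg2.2.differentiable one_ne_zero) t).hasDerivAt
  refine ⟨?_, ?_, ?_, ?_⟩
  · -- momentum
    intro t ht x y hy
    set X := x + g t with hX
    set D := fderiv ℝ (fun q : ℝ × ℝ × ℝ => u q.1 q.2.1 q.2.2) (t, X, y) with hD
    set Dv := fderiv ℝ (fun q : ℝ × ℝ × ℝ => v q.1 q.2.1 q.2.2) (t, X, y) with hDv
    set Dp := fderiv ℝ (fun q : ℝ × ℝ => p q.1 q.2) (t, X) with hDp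
    -- rewrite hypothesis derivatives
    have e1 : deriv (fun s => u s X y) t = D (1, 0, 0) :=
      (aux3 hud (hasDerivAt_id t) (hasDerivAt_const t X) (hasDerivAt_const t y)).deriv
    have e2 : deriv (fun x' => u t x' y) X = D (0, 1, 0) :=
      (aux3 hud (hasDerivAt_const X t) (hasDerivAt_id X) (hasDerivAt_const X y)).deriv
    have e3 : deriv (fun y' => u t X y') y = D (0, 0, 1) :=
      (aux3 hud (hasDerivAt_const y t) (hasDerivAt_const y X) (hasDerivAt_id y)).deriv
    have e4 : deriv (fun x' => p t x') X = Dp (0, 1) :=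
      (aux2 hpd (hasDerivAt_const X t) (hasDerivAt_id X)).deriv
    have hm := hmom t ht X y hy
    rw [e1, e2, e3, e4] at hm
    -- time derivative of U
    have hUt : deriv (fun s => U s x y) t = D (1, deriv g t, 0) - deriv (deriv g) t := by
      have h1 : HasDerivAt (fun s => u s (x + g s) y) (D (1, deriv g t, 0)) t := by
        have := aux3 hud (hasDerivAt_id t) ((hasDerivAt_const t x).add (hgd t))
          (hasDerivAt_const t y)
        simpa using this
      have h2 : HasDerivAt (fun s => U s x y)
          (D (1, deriv g t, 0) - deriv (deriv g) t) t := by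
        have := h1.sub (hgd2 t)
        refine this.congr_of_eventuallyEq ?_
        filter_upwards with s
        rw [hU]; rfl
      exact h2.deriv
    have hUx : deriv (fun x' => U t x' y) x = D (0, 1, 0) := by
      have h1 : HasDerivAt (fun x' => u t (x' + g t) y) (D (0, 1, 0)) x := by
        have := aux3 hud (hasDerivAt_const x t)
          ((hasDerivAt_id x).add (hasDerivAt_const x (g t))) (hasDerivAt_const x y)
        simpa using this
      have h2 : HasDerivAt (fun x' => U t x' y) (D (0, 1, 0) - 0) x := by
        refine (h1.sub (hasDerivAt_const x (deriv g t))).congr_of_eventuallyEq ?_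
        filter_upwards with s
        rw [hU]; rfl
      simpa using h2.deriv
    have hUy : deriv (fun y' => U t x y') y = D (0, 0, 1) := by
      have h1 : HasDerivAt (fun y' => u t X y') (D (0, 0, 1)) y := by
        have := aux3 hud (hasDerivAt_const y t) (hasDerivAt_const y X) (hasDerivAt_id y)
        simpa using this
      have h2 : HasDerivAt (fun y' => U t x y') (D (0, 0, 1) - 0) y := by
        refine (h1.sub (hasDerivAt_const y (deriv g t))).congr_of_eventuallyEq ?_
        filter_upwards with s
        rw [hU]; rfl
      simpa using h2.deriv
    have hPx : deriv (fun x' => P t x') x = Dp (0, 1) + deriv (deriv g) t := by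
      have h1 : HasDerivAt (fun x' => p t (x' + g t)) (Dp (0, 1)) x := by
        have := aux2 hpd (hasDerivAt_const x t)
          ((hasDerivAt_id x).add (hasDerivAt_const x (g t)))
        simpa using this
      have h3 : HasDerivAt (fun x' : ℝ => x' * deriv (deriv g) t)
          (deriv (deriv g) t) x := by
        simpa using (hasDerivAt_id x).mul_const (deriv (deriv g) t)
      have h2 : HasDerivAt (fun x' => P t x') (Dp (0, 1) + deriv (deriv g) t) x := by
        refine (h1.add h3).congr_of_eventuallyEq ?_
        filter_upwards with s
        rw [hP]; rfl
      exact h2.deriv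
    have hlin : D (1, deriv g t, 0) = D (1, 0, 0) + deriv g t * D (0, 1, 0) := by
      have : ((1 : ℝ), deriv g t, (0 : ℝ))
          = (1, 0, 0) + deriv g t • ((0 : ℝ), (1 : ℝ), (0 : ℝ)) := by
        simp [Prod.ext_iff]
      rw [this, map_add, map_smul]
      simp
    rw [hUt, hUx, hUy, hPx, hU, hV, hlin, ← hX]
    linear_combination hm
  · -- incompressibility
    intro t ht x y hy
    set X := x + g t with hX
    set D := fderiv ℝ (fun q : ℝ × ℝ × ℝ => u q.1 q.2.1 q.2.2) (t, X, y) with hD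
    set Dv := fderiv ℝ (fun q : ℝ × ℝ × ℝ => v q.1 q.2.1 q.2.2) (t, X, y) with hDv
    have e2 : deriv (fun x' => u t x' y) X = D (0, 1, 0) :=
      (aux3 hud (hasDerivAt_const X t) (hasDerivAt_id X) (hasDerivAt_const X y)).deriv
    have e3 : deriv (fun y' => v t X y') y = Dv (0, 0, 1) :=
      (aux3 hvd (hasDerivAt_const y t) (hasDerivAt_const y X) (hasDerivAt_id y)).deriv
    have hi := hinc t ht X y hy
    rw [e2, e3] at hi
    have hUx : deriv (fun x' => U t x' y) x = D (0, 1, 0) := by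
      have h1 : HasDerivAt (fun x' => u t (x' + g t) y) (D (0, 1, 0)) x := by
        have := aux3 hud (hasDerivAt_const x t)
          ((hasDerivAt_id x).add (hasDerivAt_const x (g t))) (hasDerivAt_const x y)
        simpa using this
      have h2 : HasDerivAt (fun x' => U t x' y) (D (0, 1, 0) - 0) x := by
        refine (h1.sub (hasDerivAt_const x (deriv g t))).congr_of_eventuallyEq ?_
        filter_upwards with s
        rw [hU]; rfl
      simpa using h2.deriv
    have hVy : deriv (fun y' => V t x y') y = Dv (0, 0, 1) := by
      have h1 : HasDerivAt (fun y' => v t X y') (Dv (0, 0, 1)) y := by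
        have := aux3 hvd (hasDerivAt_const y t) (hasDerivAt_const y X) (hasDerivAt_id y)
        simpa using this
      have h2 : HasDerivAt (fun y' => V t x y') (Dv (0, 0, 1)) y := by
        refine h1.congr_of_eventuallyEq ?_
        filter_upwards with s
        rw [hV]
      exact h2.deriv
    rw [hUx, hVy]
    exact hi
  · -- boundary conditions
    intro t ht x
    rw [hV, hV]
    exact hbc t ht (x + g t)
  · -- initial data
    intro x y hy
    rw [hU, hg0, hg'0]
    simp
end

section
/- Let a : [0,T) × [0,1] → ℝ and v : [0,T) × [0,1] → ℝ be smooth with: (1) a_t + v a_y = a² − 2∫₀¹ a(t,z)² dz; (2) v(t,0) = v(t,1) = 0 and v_y = a; (3) for each t, y ↦ a(t,y) satisfies a_y(t,0) = 0, a_yy(t,·) > 0 on (0,1), and ∫₀¹ a(t,y) dy = 0. Then the function α(t) := a(t,1) satisfies α'(t) ≥ (1/3) α(t)². -/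
open intervalIntegral Set

theorem boundary_value_riccati
    (T : ℝ) (a v : ℝ → ℝ → ℝ)
    (ha : ContDiff ℝ (⊤ : ℕ∞) (fun q : ℝ × ℝ => a q.1 q.2))
    (hv : ContDiff ℝ (⊤ : ℕ∞) (fun q : ℝ × ℝ => v q.1 q.2))
    (heq : ∀ t ∈ Set.Ico 0 T, ∀ y ∈ Set.Icc (0:ℝ) 1,
      deriv (fun s => a s y) t + v t y * deriv (fun y' => a t y') y
        = (a t y)^2 - 2 * ∫ z in (0:ℝ)..1, (a t z)^2)
    (hbc : ∀ t ∈ Set.Ico 0 T, v t 0 = 0 ∧ v t 1 = 0)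
    (hvy : ∀ t ∈ Set.Ico 0 T, ∀ y ∈ Set.Icc (0:ℝ) 1,
      deriv (fun y' => v t y') y = a t y)
    (hay0 : ∀ t ∈ Set.Ico 0 T, deriv (fun y' => a t y') 0 = 0)
    (hayy : ∀ t ∈ Set.Ico 0 T, ∀ y ∈ Set.Ioo (0:ℝ) 1,
      0 < deriv (deriv (fun y' => a t y')) y)
    (hmean : ∀ t ∈ Set.Ico 0 T, ∫ y in (0:ℝ)..1, a t y = 0) :
    ∀ t ∈ Set.Ico 0 T, (1/3) * (a t 1)^2 ≤ deriv (fun s => a s 1) t := by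
  intro t ht
  -- notation
  set f : ℝ → ℝ := fun y => a t y with hf_def
  have hfC : ContDiff ℝ (⊤ : ℕ∞) f := by
    have h1 : ContDiff ℝ (⊤ : ℕ∞) (fun q : ℝ × ℝ => a q.1 q.2) := ha.of_le (by simp)
    exact h1.comp (ContDiff.prodMk (contDiff_const (c := t)) contDiff_id)
  set g : ℝ → ℝ := deriv f with hg_def
  set h : ℝ → ℝ := deriv g with hh_def
  have hgC : ContDiff ℝ (⊤ : ℕ∞) g := (contDiff_infty_iff_deriv.mp hfC).2
  have hhC : ContDiff ℝ (⊤ : ℕ∞) h := (contDiff_infty_iff_deriv.mp hgC).2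
  have hfc : Continuous f := hfC.continuous
  have hgc : Continuous g := hgC.continuous
  have hhc : Continuous h := hhC.continuous
  have hfd : ∀ y, HasDerivAt f (g y) y := fun y =>
    ((hfC.differentiable (by simp)) y).hasDerivAt
  have hgd : ∀ y, HasDerivAt g (h y) y := fun y =>
    ((hgC.differentiable (by simp)) y).hasDerivAt
  have hg0 : g 0 = 0 := hay0 t ht
  have hhpos : ∀ y ∈ Set.Ioo (0:ℝ) 1, 0 < h y := hayy t ht
  have hmean' : ∫ y in (0:ℝ)..1, f y = 0 := hmean t ht
  set B : ℝ := f 1 with hB_def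
  -- monotonicity of g
  have hgmono : MonotoneOn g (Set.Icc (0:ℝ) 1) := by
    apply monotoneOn_of_deriv_nonneg (convex_Icc 0 1) hgc.continuousOn
      (fun y _ => ((hgd y).differentiableAt).differentiableWithinAt)
    intro y hy
    rw [interior_Icc] at hy
    rw [(hgd y).deriv]
    exact (hhpos y hy).le
  have hgnn : ∀ y ∈ Set.Icc (0:ℝ) 1, 0 ≤ g y := by
    intro y hy
    have := hgmono (Set.left_mem_Icc.mpr (by norm_num)) hy hy.1
    rwa [hg0] at this
  have hfmono : MonotoneOn f (Set.Icc (0:ℝ) 1) := by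
    apply monotoneOn_of_deriv_nonneg (convex_Icc 0 1) hfc.continuousOn
      (fun y _ => ((hfd y).differentiableAt).differentiableWithinAt)
    intro y hy
    rw [interior_Icc] at hy
    rw [(hfd y).deriv]
    exact hgnn y (Set.Ioo_subset_Icc_self hy)
  have hB0 : 0 ≤ B := by
    have hle : ∀ y ∈ Set.Icc (0:ℝ) 1, f y ≤ B :=
      fun y hy => hfmono hy (Set.right_mem_Icc.mpr (by norm_num)) hy.2
    have := intervalIntegral.integral_mono_on (by norm_num : (0:ℝ) ≤ 1)
      (hfc.intervalIntegrable 0 1) (_root_.intervalIntegrable_const (μ := MeasureTheory.volume) (c := B)) hle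
    simpa [hmean'] using this
  have hhnn : ∀ s ∈ Set.Icc (0:ℝ) 1, 0 ≤ h s := by
    intro s hs
    rcases eq_or_lt_of_le hs.1 with h0 | h0
    · have hne : (nhdsWithin (0:ℝ) (Set.Ioo 0 1)).NeBot := by
        rw [← mem_closure_iff_nhdsWithin_neBot, closure_Ioo (by norm_num : (0:ℝ) ≠ 1)]
        exact ⟨le_refl 0, by norm_num⟩
      have htend : Filter.Tendsto h (nhdsWithin 0 (Set.Ioo (0:ℝ) 1)) (nhds (h 0)) :=
        (hhc.continuousAt).continuousWithinAt.tendsto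
      have := ge_of_tendsto htend
        (Filter.eventually_of_mem self_mem_nhdsWithin fun y hy => (hhpos y hy).le)
      rw [← h0]
      exact this
    rcases eq_or_lt_of_le hs.2 with h1 | h1
    · have hne : (nhdsWithin (1:ℝ) (Set.Ioo 0 1)).NeBot := by
        rw [← mem_closure_iff_nhdsWithin_neBot, closure_Ioo (by norm_num : (0:ℝ) ≠ 1)]
        exact ⟨by norm_num, le_refl 1⟩
      have htend : Filter.Tendsto h (nhdsWithin 1 (Set.Ioo (0:ℝ) 1)) (nhds (h 1)) :=
        (hhc.continuousAt).continuousWithinAt.tendsto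
      have := ge_of_tendsto htend
        (Filter.eventually_of_mem self_mem_nhdsWithin fun y hy => (hhpos y hy).le)
      rw [h1]
      exact this
    · exact (hhpos s ⟨h0, h1⟩).le
  -- helper derivative for squares
  have hsq : ∀ x : ℝ, HasDerivAt (fun y : ℝ => y ^ 2) (2 * x) x := fun x => by
    simpa using hasDerivAt_pow 2 x
  -- L1 : ∫ y*g = B
  have L1 : ∫ y in (0:ℝ)..1, y * g y = B := by
    have := intervalIntegral.integral_mul_deriv_eq_deriv_mul
      (u := fun y : ℝ => y) (u' := fun _ => (1:ℝ)) (v := f) (v' := g)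
      (fun x _ => hasDerivAt_id x) (fun x _ => hfd x)
      intervalIntegrable_const (hgc.intervalIntegrable 0 1)
    simpa [hmean'] using this
  set J : ℝ := ∫ y in (0:ℝ)..1, y * f y with hJ_def
  -- L2 : ∫ y^2*g = B - 2J
  have L2 : ∫ y in (0:ℝ)..1, y ^ 2 * g y = B - 2 * J := by
    have h2 := intervalIntegral.integral_mul_deriv_eq_deriv_mul
      (u := fun y : ℝ => y ^ 2) (u' := fun y => 2 * y) (v := f) (v' := g)
      (fun x _ => hsq x) (fun x _ => hfd x)
      ((by fun_prop : Continuous _).intervalIntegrable 0 1) (hgc.intervalIntegrable 0 1)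
    have h3 : ∫ y in (0:ℝ)..1, 2 * y * f y = 2 * J := by
      rw [hJ_def, ← intervalIntegral.integral_const_mul]
      congr 1; ext y; ring
    rw [h3] at h2
    simpa using h2
  -- L3 : J ≤ B / 6  (Chebyshev-type argument)
  have L3 : J ≤ B / 6 := by
    have hptw : ∀ y ∈ Set.Icc (0:ℝ) 1,
        (y / 3 - y ^ 2 / 2) * g y ≤ (y / 3 - y ^ 2 / 2) * g (2/3) := by
      intro y hy
      rcases le_total y (2/3) with hy23 | hy23
      · have hw : 0 ≤ y / 3 - y ^ 2 / 2 := by nlinarith [hy.1]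
        have hgle : g y ≤ g (2/3) := hgmono hy ⟨by norm_num, by norm_num⟩ hy23
        exact mul_le_mul_of_nonneg_left hgle hw
      · have hw : y / 3 - y ^ 2 / 2 ≤ 0 := by nlinarith [hy.2]
        have hgle : g (2/3) ≤ g y := hgmono ⟨by norm_num, by norm_num⟩ hy hy23
        exact mul_le_mul_of_nonpos_left hgle hw
    have hint1 : IntervalIntegrable (fun y => (y / 3 - y ^ 2 / 2) * g y) MeasureTheory.volume 0 1 := by
      apply Continuous.intervalIntegrable; fun_prop
    have hint2 : IntervalIntegrable (fun y => (y / 3 - y ^ 2 / 2) * g (2/3)) MeasureTheory.volume 0 1 := by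
      apply Continuous.intervalIntegrable; fun_prop
    have hmono := intervalIntegral.integral_mono_on (by norm_num : (0:ℝ) ≤ 1) hint1 hint2 hptw
    have hrhs : ∫ y in (0:ℝ)..1, (y / 3 - y ^ 2 / 2) * g (2/3) = 0 := by
      rw [intervalIntegral.integral_mul_const]
      have : ∫ y in (0:ℝ)..1, (y / 3 - y ^ 2 / 2) = 0 := by
        rw [intervalIntegral.integral_sub ((by fun_prop : Continuous fun y:ℝ => y/3).intervalIntegrable 0 1) ((by fun_prop : Continuous fun y:ℝ => y^2/2).intervalIntegrable 0 1)]
        rw [intervalIntegral.integral_div, intervalIntegral.integral_div,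
          integral_id, integral_pow]
        norm_num
      rw [this, zero_mul]
    rw [hrhs] at hmono
    have hlhs : ∫ y in (0:ℝ)..1, (y / 3 - y ^ 2 / 2) * g y
        = (∫ y in (0:ℝ)..1, y * g y) / 3 - (∫ y in (0:ℝ)..1, y ^ 2 * g y) / 2 := by
      rw [← intervalIntegral.integral_div, ← intervalIntegral.integral_div,
        ← intervalIntegral.integral_sub ((by fun_prop : Continuous fun y:ℝ => y * g y / 3).intervalIntegrable 0 1) ((by fun_prop : Continuous fun y:ℝ => y ^ 2 * g y / 2).intervalIntegrable 0 1)]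
      congr 1; ext y; ring
    rw [hlhs, L1, L2] at hmono
    linarith
  -- Q and R
  set Q : ℝ → ℝ := fun y => -∫ u in (0:ℝ)..y, f u with hQ_def
  have hQd : ∀ y, HasDerivAt Q (-(f y)) y := fun y =>
    ((hfc.integral_hasStrictDerivAt 0 y).hasDerivAt).neg
  have hQc : Continuous Q := by
    have : Differentiable ℝ Q := fun y => (hQd y).differentiableAt
    exact this.continuous
  have hQ0 : Q 0 = 0 := by simp [hQ_def]
  have hQ1 : Q 1 = 0 := by simp [hQ_def, hmean']
  set R : ℝ → ℝ := fun s => ∫ y in s..(1:ℝ), Q y with hR_def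
  have hRsplit : ∀ s, R s = (∫ y in (0:ℝ)..1, Q y) - ∫ y in (0:ℝ)..s, Q y := by
    intro s
    have := intervalIntegral.integral_add_adjacent_intervals
      (hQc.intervalIntegrable (μ := MeasureTheory.volume) 0 s) (hQc.intervalIntegrable s 1)
    rw [hR_def]
    simp only []
    linarith [this]
  have hRd : ∀ s, HasDerivAt R (-(Q s)) s := by
    intro s
    have h1 : HasDerivAt (fun s => (∫ y in (0:ℝ)..1, Q y) - ∫ y in (0:ℝ)..s, Q y) (-(Q s)) s := by
      simpa using (((hQc.integral_hasStrictDerivAt 0 s).hasDerivAt).const_sub (∫ y in (0:ℝ)..1, Q y))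
    exact h1.congr_of_eventuallyEq (Filter.Eventually.of_forall fun x => (hRsplit x))
  have hRc : Continuous R := by
    have : Differentiable ℝ R := fun s => (hRd s).differentiableAt
    exact this.continuous
  have hR1 : R 1 = 0 := by simp [hR_def]
  -- L4 : R 0 = J
  have L4 : R 0 = J := by
    have h4 := intervalIntegral.integral_mul_deriv_eq_deriv_mul
      (u := fun y : ℝ => y) (u' := fun _ => (1:ℝ)) (v := Q) (v' := fun y => -(f y))
      (fun x _ => hasDerivAt_id x) (fun x _ => hQd x)
      intervalIntegrable_const ((by fun_prop : Continuous _).intervalIntegrable 0 1)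
    -- ∫ y * (-(f y)) = 1 * Q 1 - 0 * Q 0 - ∫ 1 * Q
    have h5 : ∫ y in (0:ℝ)..1, y * (-(f y)) = -J := by
      rw [hJ_def, ← intervalIntegral.integral_neg]
      congr 1; ext y; ring
    rw [h5, hQ1] at h4
    have hR0 : R 0 = ∫ y in (0:ℝ)..1, Q y := by rw [hR_def]
    rw [hR0]
    simp at h4
    linarith
  -- I3 : ∫ Q*g = ∫ f^2
  set S : ℝ := ∫ z in (0:ℝ)..1, f z ^ 2 with hS_def
  have I3 : ∫ y in (0:ℝ)..1, Q y * g y = S := by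
    have h4 := intervalIntegral.integral_mul_deriv_eq_deriv_mul
      (u := Q) (u' := fun y => -(f y)) (v := f) (v' := g)
      (fun x _ => hQd x) (fun x _ => hfd x)
      ((by fun_prop : Continuous _).intervalIntegrable 0 1) (hgc.intervalIntegrable 0 1)
    rw [hQ1, hQ0] at h4
    have h5 : ∫ y in (0:ℝ)..1, -(f y) * f y = -S := by
      rw [hS_def, ← intervalIntegral.integral_neg]
      congr 1; ext y; ring
    rw [h5] at h4
    linarith [h4]
  -- I4 : ∫ R*h = ∫ Q*g
  have I4 : ∫ s in (0:ℝ)..1, R s * h s = ∫ y in (0:ℝ)..1, Q y * g y := by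
    have h4 := intervalIntegral.integral_mul_deriv_eq_deriv_mul
      (u := R) (u' := fun s => -(Q s)) (v := g) (v' := h)
      (fun x _ => hRd x) (fun x _ => hgd x)
      ((hQc.neg).intervalIntegrable 0 1) (hhc.intervalIntegrable 0 1)
    rw [hR1, hg0] at h4
    have h5 : ∫ y in (0:ℝ)..1, -(Q y) * g y = -∫ y in (0:ℝ)..1, Q y * g y := by
      rw [← intervalIntegral.integral_neg]
      congr 1; ext y; ring
    rw [h5] at h4
    simp at h4
    linarith [h4]
  -- I7 : ∫ (1-s^2)*h = 2B
  have I7 : ∫ s in (0:ℝ)..1, (1 - s ^ 2) * h s = 2 * B := by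
    have h4 := intervalIntegral.integral_mul_deriv_eq_deriv_mul
      (u := fun s : ℝ => 1 - s ^ 2) (u' := fun s => -(2 * s)) (v := g) (v' := h)
      (fun x _ => (hsq x).const_sub 1) (fun x _ => hgd x)
      ((by fun_prop : Continuous fun s:ℝ => -(2*s)).intervalIntegrable 0 1) (hhc.intervalIntegrable 0 1)
    rw [hg0] at h4
    have h5 : ∫ y in (0:ℝ)..1, -(2 * y) * g y = -(2 * B) := by
      rw [← L1, ← intervalIntegral.integral_const_mul, ← intervalIntegral.integral_neg]
      congr 1; ext y; ring
    rw [h5] at h4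
    simp at h4
    linarith [h4]
  -- the function ψ and its positivity
  set φ : ℝ → ℝ := fun s => -(B / 3) * s + Q s with hφ_def
  set ψ : ℝ → ℝ := fun s => B / 6 * (1 - s ^ 2) - R s with hψ_def
  have hψd : ∀ s, HasDerivAt ψ (φ s) s := by
    intro s
    have h1 : HasDerivAt (fun s : ℝ => B / 6 * (1 - s ^ 2)) (B / 6 * (-(2 * s))) s :=
      ((hsq s).const_sub 1).const_mul (B / 6)
    have h2 := h1.sub (hRd s)
    have : B / 6 * (-(2 * s)) - -Q s = φ s := by rw [hφ_def]; ring
    rw [this] at h2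
    exact h2
  have hφd : ∀ s, HasDerivAt φ (-(B / 3) - f s) s := by
    intro s
    have h1 : HasDerivAt (fun s : ℝ => -(B / 3) * s) (-(B / 3)) s := by
      simpa using (hasDerivAt_id s).const_mul (-(B / 3))
    have h2 := h1.add (hQd s)
    have : -(B / 3) + -f s = -(B / 3) - f s := by ring
    rwa [this] at h2
  have hφderiv : deriv φ = fun s => -(B / 3) - f s := funext fun s => (hφd s).deriv
  have hφ2d : ∀ s, HasDerivAt (fun s => -(B / 3) - f s) (-(g s)) s := fun s =>
    (hfd s).const_sub (-(B / 3))
  have hφ0 : φ 0 = 0 := by simp [hφ_def, hQ0]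
  have hψ1 : ψ 1 = 0 := by simp [hψ_def, hR1]
  have hψ0 : 0 ≤ ψ 0 := by
    rw [hψ_def]
    simp only []
    rw [L4]
    simp
    linarith [L3]
  have hconc : ConcaveOn ℝ (Set.Icc (0:ℝ) 1) φ := by
    apply concaveOn_of_deriv2_nonpos (convex_Icc 0 1)
      (fun s _ => (hφd s).continuousAt.continuousWithinAt)
      (fun s _ => (hφd s).differentiableAt.differentiableWithinAt)
    · intro s _
      rw [hφderiv]
      exact (hφ2d s).differentiableAt.differentiableWithinAt
    · intro s hs
      rw [interior_Icc] at hs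
      have : deriv (deriv φ) s = -(g s) := by
        rw [hφderiv, (hφ2d s).deriv]
      show deriv^[2] φ s ≤ 0
      simp only [Function.iterate_succ, Function.iterate_zero, Function.comp_apply, Function.id_def]
      rw [this]
      simp only [neg_nonpos]
      exact hgnn s (Set.Ioo_subset_Icc_self hs)
  -- I5 : ψ ≥ 0 on [0,1]
  have I5 : ∀ s ∈ Set.Icc (0:ℝ) 1, 0 ≤ ψ s := by
    intro s hs
    by_contra hneg
    push_neg at hneg
    have hs0 : 0 < s := by
      rcases eq_or_lt_of_le hs.1 with h0 | h0
      · exfalso; rw [← h0] at hneg; linarith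
      · exact h0
    have hs1 : s < 1 := by
      rcases eq_or_lt_of_le hs.2 with h1 | h1
      · exfalso; rw [h1] at hneg; linarith
      · exact h1
    obtain ⟨p, hp, hpe⟩ := exists_hasDerivAt_eq_slope ψ φ hs0
      (fun x _ => (hψd x).continuousAt.continuousWithinAt)
      (fun x _ => hψd x)
    obtain ⟨q, hq, hqe⟩ := exists_hasDerivAt_eq_slope ψ φ hs1
      (fun x _ => (hψd x).continuousAt.continuousWithinAt)
      (fun x _ => hψd x)
    have hφp : φ p < 0 := by
      rw [hpe]
      apply div_neg_of_neg_of_pos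
      · linarith
      · linarith
    have hφq : 0 < φ q := by
      rw [hqe, hψ1]
      apply div_pos
      · linarith
      · linarith
    -- concavity contradiction : p = (1 - p/q)*0 + (p/q)*q
    have hq0 : 0 < q := lt_trans hs0 hq.1
    have hpq : p < q := lt_trans hp.2 hq.1
    have hθ1 : p / q < 1 := (div_lt_one hq0).mpr hpq
    have hθ0 : 0 < p / q := div_pos hp.1 hq0
    have hcc := hconc.2 (Set.left_mem_Icc.mpr (by norm_num))
      (⟨hq0.le, hq.2.le⟩ : q ∈ Set.Icc (0:ℝ) 1)
      (by linarith : (0:ℝ) ≤ 1 - p / q) (le_of_lt hθ0) (by ring)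
    rw [smul_eq_mul, smul_eq_mul, smul_eq_mul, smul_eq_mul] at hcc
    have harg : (1 - p / q) * 0 + p / q * q = p := by field_simp; ring
    rw [harg, hφ0] at hcc
    have : 0 < φ p := by
      calc (0:ℝ) < p / q * φ q := mul_pos hθ0 hφq
      _ = (1 - p / q) * 0 + p / q * φ q := by ring
      _ ≤ φ p := hcc
    linarith
  -- main estimate : S ≤ B^2/3
  have hmain : S ≤ B ^ 2 / 3 := by
    have hptw : ∀ s ∈ Set.Icc (0:ℝ) 1, R s * h s ≤ (B / 6 * (1 - s ^ 2)) * h s := by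
      intro s hs
      apply mul_le_mul_of_nonneg_right _ (hhnn s hs)
      have := I5 s hs
      rw [hψ_def] at this
      simp only [] at this
      linarith
    have hint1 : IntervalIntegrable (fun s => R s * h s) MeasureTheory.volume 0 1 :=
      (hRc.mul hhc).intervalIntegrable 0 1
    have hint2 : IntervalIntegrable (fun s => (B / 6 * (1 - s ^ 2)) * h s) MeasureTheory.volume 0 1 := by
      apply Continuous.intervalIntegrable; fun_prop
    have hmono := intervalIntegral.integral_mono_on (by norm_num : (0:ℝ) ≤ 1) hint1 hint2 hptw
    have hrhs : ∫ s in (0:ℝ)..1, (B / 6 * (1 - s ^ 2)) * h s = B / 6 * (2 * B) := by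
      rw [← I7, ← intervalIntegral.integral_const_mul]
      congr 1; ext s; ring
    rw [hrhs, I4, I3] at hmono
    linarith
  -- conclude using the PDE at y = 1
  have hpde := heq t ht 1 ⟨by norm_num, le_refl 1⟩
  rw [(hbc t ht).2, zero_mul, add_zero] at hpde
  have hS' : (∫ z in (0:ℝ)..1, (a t z) ^ 2) = S := rfl
  rw [hS'] at hpde
  have hBa : a t 1 = B := rfl
  rw [hBa, hpde]
  nlinarith [hmain, sq_nonneg B]
end
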